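/- Let d, n, r, t be natural numbers with d ≥ 1, n ≥ 1 and r ≤ t, and let ε be a real number with 0 < ε ≤ 1/2 and n · b(t,d) ≤ ε · 2^d. Suppose there is a randomized membership filter with M memory states for n-point sets in {0,1}^d that has no false negatives at radius r and has average error ε at distance t, meaning: for every S ⊆ {0,1}^d with |S| = n, the expectation over ω ∼ μ of the number of points q with D(q,S) > t that are answered positively is at most ε · |{q ∈ {0,1}^d : D(q,S) > t}|. Then (M : ℝ) ≥ (1/(2ε))^n. -/

import Mathlib

/-- `ballSize t d` is the cardinality of a Hamming ball of radius `t` in `{0,1}^d`,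
i.e. `∑_{i=0}^{min(t,d)} C(d,i)` (terms with `i > d` vanish). -/
def ballSize (t d : ℕ) : ℕ := ∑ i ∈ Finset.range (t + 1), d.choose i

/-! Derandomize by averaging: for every input set `S` some seed `ω` has at most `ε · 2^d` false
positives, so the state `enc ω S` accepts a set containing `S` of size at most
`n · b(t,d) + ε · 2^d ≤ 2ε · 2^d =: K`. Such a state can encode at most `C(K,n)` of the `C(2^d,n)`
input sets, hence `M ≥ C(2^d,n) / C(K,n) ≥ (2^d / K)^n ≥ (1/(2ε))^n`. -/

open Finset

lemma card_filter_card_le_eq_ballSize (d t : ℕ) :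
    #{A : Finset (Fin d) | #A ≤ t} = ballSize t d := by
  rw [ballSize, card_eq_sum_card_fiberwise (f := card) (t := range (t + 1))
    (fun A hA => by simpa [Nat.lt_succ_iff] using hA)]
  refine sum_congr rfl fun i hi => ?_
  have hit : i ≤ t := Nat.lt_succ_iff.1 (mem_range.1 hi)
  have hchoose := card_powersetCard i (univ : Finset (Fin d))
  rw [card_fin] at hchoose
  rw [← hchoose, powersetCard_eq_filter, powerset_univ, filter_filter]
  exact congrArg card (filter_congr fun A _ => and_iff_right_of_imp fun (hA : #A = i) => hA ▸ hit)

lemma card_hammingBall_le (d t : ℕ) (p : Fin d → Bool) :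
    #{q | hammingDist q p ≤ t} ≤ ballSize t d := by
  rw [← card_filter_card_le_eq_ballSize]
  refine card_le_card_of_injOn (fun q => ({j | q j ≠ p j} : Finset (Fin d)))
    (fun q hq => by simpa [hammingDist] using hq) fun q _ q' _ h => ?_
  funext j
  have := congrArg (j ∈ ·) h
  simp only [mem_filter, mem_univ, true_and, eq_iff_iff] at this
  revert this; cases q j <;> cases q' j <;> cases p j <;> simp

lemma one_le_ballSize (t d : ℕ) : 1 ≤ ballSize t d := by
  simpa [ballSize] using
    single_le_sum (f := d.choose) (fun _ _ => Nat.zero_le _) (mem_range.2 t.succ_pos)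

lemma card_filter_le_mul_ballSize_add {d : ℕ} (S : Finset (Fin d → Bool)) (t : ℕ)
    (P : (Fin d → Bool) → Prop) [DecidablePred P] :
    #{q | P q} ≤ #S * ballSize t d + #{q | (∀ p ∈ S, t < hammingDist q p) ∧ P q} := by
  calc #{q | P q}
      ≤ #(S.biUnion fun p => {q | hammingDist q p ≤ t})
          + #{q | (∀ p ∈ S, t < hammingDist q p) ∧ P q} := by
        refine (card_le_card fun q hq => ?_).trans (card_union_le _ _)
        by_cases hnear : ∃ p ∈ S, hammingDist q p ≤ t
        · obtain ⟨p, hp, hpq⟩ := hnear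
          exact mem_union_left _ (mem_biUnion.2 ⟨p, hp, by simpa using hpq⟩)
        · push Not at hnear
          exact mem_union_right _ (by simp_all)
    _ ≤ #S * ballSize t d + #{q | (∀ p ∈ S, t < hammingDist q p) ∧ P q} := by
        gcongr
        exact card_biUnion_le_card_mul _ _ _ fun p _ => card_hammingBall_le d t p

lemma exists_le_of_sum_mul_le {ι : Type*} [Fintype ι] {μ X : ι → ℝ} {c : ℝ}
    (hμ0 : ∀ i, 0 ≤ μ i) (hμ1 : ∑ i, μ i = 1) (h : ∑ i, μ i * X i ≤ c) : ∃ i, X i ≤ c := by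
  have hne : (univ : Finset ι).Nonempty := by
    by_contra he
    simp_all [not_nonempty_iff_eq_empty.1 he]
  obtain ⟨i, -, hi⟩ := exists_min_image univ X hne
  refine ⟨i, ?_⟩
  calc X i = ∑ j, μ j * X i := by rw [← sum_mul, hμ1, one_mul]
    _ ≤ ∑ j, μ j * X j :=
        sum_le_sum fun j _ => mul_le_mul_of_nonneg_left (hi j (mem_univ j)) (hμ0 j)
    _ ≤ c := h

lemma choose_card_le_choose_mul_card {α β : Type*} [Fintype α] [Fintype β] [DecidableEq β]
    {n K : ℕ} (f : {S : Finset α // #S = n} → β) (A : β → Finset α)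
    (hsub : ∀ S, S.1 ⊆ A (f S)) (hcard : ∀ S, #(A (f S)) ≤ K) :
    (Fintype.card α).choose n ≤ K.choose n * Fintype.card β := by
  rw [← Fintype.card_finset_len, ← card_univ, ← card_univ (α := β)]
  refine card_le_mul_card_image_of_maps_to (fun S _ => mem_univ (f S)) _ fun b _ => ?_
  rcases (univ.filter fun S => f S = b).eq_empty_or_nonempty with he | ⟨S₀, hS₀⟩
  · simp [he]
  have hb : f S₀ = b := (mem_filter.1 hS₀).2
  calc #{S | f S = b} ≤ #(powersetCard n (A b)) :=
        card_le_card_of_injOn Subtype.val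
          (fun S hS => mem_powersetCard.2 ⟨(mem_filter.1 hS).2 ▸ hsub S, S.2⟩)
          Subtype.val_injective.injOn
    _ ≤ K.choose n := by
        rw [card_powersetCard]
        exact Nat.choose_le_choose n (hb ▸ hcard S₀)

lemma choose_mul_pow_le_choose_mul_pow {K N : ℕ} (n : ℕ) (h : K ≤ N) :
    K.choose n * N ^ n ≤ N.choose n * K ^ n := by
  have hdesc : K.descFactorial n * N ^ n ≤ N.descFactorial n * K ^ n := by
    rw [Nat.descFactorial_eq_prod_range, Nat.descFactorial_eq_prod_range, ← card_range n,
      ← prod_const, ← prod_const, card_range, ← prod_mul_distrib, ← prod_mul_distrib]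
    refine prod_le_prod' fun i _ => ?_
    rw [Nat.sub_mul, Nat.sub_mul, mul_comm N K]
    exact Nat.sub_le_sub_left (Nat.mul_le_mul_left i h) _
  rw [Nat.descFactorial_eq_factorial_mul_choose, Nat.descFactorial_eq_factorial_mul_choose,
    mul_assoc, mul_assoc] at hdesc
  exact Nat.le_of_mul_le_mul_left hdesc (Nat.factorial_pos n)

lemma pow_le_mul_pow_of_choose_le_choose_mul {K N M n : ℕ} (hKN : K ≤ N) (hnN : n ≤ N)
    (h : N.choose n ≤ K.choose n * M) : N ^ n ≤ M * K ^ n := by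
  refine Nat.le_of_mul_le_mul_left ?_ (Nat.choose_pos hnN)
  calc N.choose n * N ^ n ≤ K.choose n * M * N ^ n := by gcongr
    _ = M * (K.choose n * N ^ n) := by ring
    _ ≤ M * (N.choose n * K ^ n) :=
        Nat.mul_le_mul_left M (choose_mul_pow_le_choose_mul_pow n hKN)
    _ = N.choose n * (M * K ^ n) := by ring

lemma one_div_pow_le_of_pow_le_mul_pow {x c K M : ℝ} (n : ℕ) (hx : 0 < x) (hc : 0 < c)
    (hK0 : 0 ≤ K) (hK : K ≤ c * x) (hM : 0 ≤ M) (h : x ^ n ≤ M * K ^ n) : (1 / c) ^ n ≤ M := by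
  rw [one_div_pow, div_le_iff₀ (pow_pos hc n)]
  refine le_of_mul_le_mul_right ?_ (pow_pos hx n)
  calc 1 * x ^ n ≤ M * K ^ n := by rwa [one_mul]
    _ ≤ M * (c * x) ^ n := by gcongr
    _ = M * c ^ n * x ^ n := by ring

lemma one_div_pow_le_card_of_card_le {α β : Type*} [Fintype α] [Nonempty α] [Fintype β]
    [DecidableEq β] {n : ℕ} {c : ℝ} (hc0 : 0 < c) (hc1 : c ≤ 1) (hn : n ≤ Fintype.card α)
    (f : {S : Finset α // #S = n} → β) (A : β → Finset α) (hsub : ∀ S, S.1 ⊆ A (f S))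
    (hcard : ∀ S, (#(A (f S)) : ℝ) ≤ c * Fintype.card α) :
    (1 / c) ^ n ≤ Fintype.card β := by
  have hKN : ⌊c * Fintype.card α⌋₊ ≤ Fintype.card α :=
    Nat.floor_le_of_le (mul_le_of_le_one_left (Nat.cast_nonneg _) hc1)
  have hcount := choose_card_le_choose_mul_card f A hsub fun S => Nat.le_floor (hcard S)
  have hpow : (Fintype.card α : ℝ) ^ n ≤ Fintype.card β * (⌊c * Fintype.card α⌋₊ : ℝ) ^ n := by
    exact_mod_cast pow_le_mul_pow_of_choose_le_choose_mul hKN hn hcount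
  exact one_div_pow_le_of_pow_le_mul_pow n (Nat.cast_pos.2 Fintype.card_pos) hc0
    (Nat.cast_nonneg _) (Nat.floor_le (by positivity)) (Nat.cast_nonneg _) hpow

lemma le_two_pow_of_mul_ballSize_le {n t d : ℕ} {ε : ℝ} (hε : ε ≤ 1)
    (h : (n : ℝ) * ballSize t d ≤ ε * 2 ^ d) : n ≤ 2 ^ d := by
  have hb : (1 : ℝ) ≤ ballSize t d := by exact_mod_cast one_le_ballSize t d
  have : (n : ℝ) ≤ 2 ^ d := by nlinarith [n.cast_nonneg (α := ℝ), pow_pos (two_pos (α := ℝ)) d]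
  exact_mod_cast this

theorem stmt1_general (d n r t M : ℕ) (ε : ℝ)
    (hε0 : 0 < ε) (hε1 : ε ≤ 1 / 2)
    (hball : (n : ℝ) * (ballSize t d : ℝ) ≤ ε * 2 ^ d)
    (Ω : Type) [Fintype Ω] (μ : Ω → ℝ)
    (hμ0 : ∀ ω, 0 ≤ μ ω) (hμ1 : ∑ ω : Ω, μ ω = 1)
    (enc : Ω → {S : Finset (Fin d → Bool) // S.card = n} → Fin M)
    (qry : Fin M → (Fin d → Bool) → Bool)
    (hFN : ∀ (ω : Ω) (S : {S : Finset (Fin d → Bool) // S.card = n})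
      (q : Fin d → Bool),
      (∃ p ∈ S.1, hammingDist q p ≤ r) → qry (enc ω S) q = true)
    (hAvg : ∀ S : {S : Finset (Fin d → Bool) // S.card = n},
      ∑ ω : Ω, μ ω *
        ((Finset.univ.filter (fun q : Fin d → Bool =>
          (∀ p ∈ S.1, t < hammingDist q p) ∧ qry (enc ω S) q = true)).card : ℝ)
      ≤ ε * ((Finset.univ.filter (fun q : Fin d → Bool =>
          ∀ p ∈ S.1, t < hammingDist q p)).card : ℝ)) :
    (1 / (2 * ε)) ^ n ≤ (M : ℝ) := by
  have hcube : (Fintype.card (Fin d → Bool) : ℝ) = 2 ^ d := by simp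
  have hgood : ∀ S : {S : Finset (Fin d → Bool) // #S = n}, ∃ ω,
      (#{q | (∀ p ∈ S.1, t < hammingDist q p) ∧ qry (enc ω S) q = true} : ℝ) ≤ ε * 2 ^ d := by
    intro S
    obtain ⟨ω, hω⟩ := exists_le_of_sum_mul_le hμ0 hμ1 (hAvg S)
    exact ⟨ω, hω.trans (mul_le_mul_of_nonneg_left (hcube ▸ mod_cast card_le_univ _) hε0.le)⟩
  choose pick hpick using hgood
  let A : Fin M → Finset (Fin d → Bool) := fun m => {q | qry m q = true}
  have hsub : ∀ S, S.1 ⊆ A (enc (pick S) S) := fun S p hp => by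
    simpa [A] using hFN _ S p ⟨p, hp, by simp⟩
  have hsmall : ∀ S, (#(A (enc (pick S) S)) : ℝ) ≤ 2 * ε * Fintype.card (Fin d → Bool) := by
    intro S
    have hsplit := card_filter_le_mul_ballSize_add S.1 t (fun q => qry (enc (pick S) S) q = true)
    rw [S.2] at hsplit
    calc (#(A (enc (pick S) S)) : ℝ)
        ≤ n * ballSize t d
          + #{q | (∀ p ∈ S.1, t < hammingDist q p) ∧ qry (enc (pick S) S) q = true} := by
          exact_mod_cast hsplit
      _ ≤ ε * 2 ^ d + ε * 2 ^ d := add_le_add hball (hpick S)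
      _ = 2 * ε * Fintype.card (Fin d → Bool) := by rw [hcube]; ring
  have hnN : n ≤ Fintype.card (Fin d → Bool) := by
    simpa using le_two_pow_of_mul_ballSize_le (by linarith) hball
  simpa using one_div_pow_le_card_of_card_le (by positivity) (by linarith) hnN
    (fun S => enc (pick S) S) A hsub hsmall

/-- Any randomized membership filter with `M` memory states for
`n`-point sets in `{0,1}^d` having no false negatives at radius `r` and average
error `ε` at distance `t`, with `n·b(t,d) ≤ ε·2^d` and `0 < ε ≤ 1/2`,
satisfies `M ≥ (1/(2ε))^n`. -/
theorem stmt1 (d n r t M : ℕ) (ε : ℝ) (hd : 1 ≤ d) (hn : 1 ≤ n) (hrt : r ≤ t)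
    (hε0 : 0 < ε) (hε1 : ε ≤ 1 / 2)
    (hball : (n : ℝ) * (ballSize t d : ℝ) ≤ ε * 2 ^ d)
    (Ω : Type) [Fintype Ω] (μ : Ω → ℝ)
    (hμ0 : ∀ ω, 0 ≤ μ ω) (hμ1 : ∑ ω : Ω, μ ω = 1)
    (enc : Ω → {S : Finset (Fin d → Bool) // S.card = n} → Fin M)
    (qry : Fin M → (Fin d → Bool) → Bool)
    (hFN : ∀ (ω : Ω) (S : {S : Finset (Fin d → Bool) // S.card = n})
      (q : Fin d → Bool),
      (∃ p ∈ S.1, hammingDist q p ≤ r) → qry (enc ω S) q = true)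
    (hAvg : ∀ S : {S : Finset (Fin d → Bool) // S.card = n},
      ∑ ω : Ω, μ ω *
        ((Finset.univ.filter (fun q : Fin d → Bool =>
          (∀ p ∈ S.1, t < hammingDist q p) ∧ qry (enc ω S) q = true)).card : ℝ)
      ≤ ε * ((Finset.univ.filter (fun q : Fin d → Bool =>
          ∀ p ∈ S.1, t < hammingDist q p)).card : ℝ)) :
    (1 / (2 * ε)) ^ n ≤ (M : ℝ) :=
  stmt1_general d n r t M ε hε0 hε1 hball Ω μ hμ0 hμ1 enc qry hFN hAvg
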